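/- arXiv:math/0202241 — 2 statements merged into one kernel-verified Lean document; each statement's English description precedes it below -/
import Mathlib

section
/- (Kharitonov's Theorem for real polynomials) The real interval polynomial family Γ of order n is Hurwitz stable if and only if its four Kharitonov polynomials K_1, K_2, K_3, K_4 are Hurwitz stable. -/
open Polynomial

/-- A polynomial is Hurwitz stable if all its complex roots have negative real part. -/
def Hurwitz {R : Type} [CommRing R] [Algebra R ℂ] (p : R[X]) : Prop :=
  ∀ z : ℂ, Polynomial.aeval z p = 0 → z.re < 0

/-- The real interval polynomial family with coefficient bounds `lo`, `hi`. -/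
def intervalFamily (lo hi : ℕ → ℝ) : Set ℝ[X] :=
  {p | ∀ i, p.coeff i ∈ Set.Icc (lo i) (hi i)}

/-- Kharitonov-type vertex polynomial: the `i`-th coefficient is `hi i` when
`i % 4 ∈ hiRes`, and `lo i` otherwise. -/
noncomputable def kpoly (n : ℕ) (lo hi : ℕ → ℝ) (hiRes : Finset ℕ) : ℝ[X] :=
  ∑ i ∈ Finset.range (n + 1),
    Polynomial.C (if i % 4 ∈ hiRes then hi i else lo i) * Polynomial.X ^ i

/-!
Necessity is immediate since the four Kharitonov polynomials belong to `Γ`. Conversely, `Γ` is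
convex and all its members have degree exactly `n`, so along the segment from `K₁` to any
`p ∈ Γ` the roots move continuously and stay bounded: a root reaching the closed right
half-plane has to cross the imaginary axis. It therefore suffices that no `p ∈ Γ` vanishes at a
point `iω`, and by conjugation we may take `ω ≥ 0`.

For `ω ≥ 0` the real part of `p(iω)` only involves the even coefficients of `p`, the imaginary
part only the odd ones, with signs following `k mod 4`; so `p(iω)` lies in the axis-parallel
rectangle with corners `Kⱼ(iω)`. Along each edge of this rectangle two Kharitonov polynomials
share their even (or odd) coefficients: their values lie on the same axis, and the components
of their derivatives across that axis agree. For a Hurwitz polynomial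
`Re (p'(iω) · conj p(iω)) = |p(iω)|² ∑ⱼ Re (iω - zⱼ)⁻¹ > 0`, which forces the two values to the
same side of `0`. Hence `0` never lies on an edge; it is outside the flat rectangle at `ω = 0`,
so by the intermediate value theorem it is never inside.
-/

open Complex ComplexConjugate

theorem Complex.I_mul_ofReal_pow (ω : ℝ) (k : ℕ) :
    (I * ω) ^ k = ((ω ^ k : ℝ) : ℂ) * I ^ (k % 4) := by
  rw [mul_pow, I_pow_eq_pow_mod, ofReal_pow, mul_comm]

namespace Polynomial

theorem re_eval_derivative_mul_conj_eval_pos {P : ℂ[X]} {w : ℂ} (hP : 0 < P.degree)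
    (hroots : ∀ z, P.IsRoot z → z.re < w.re) :
    0 < (P.derivative.eval w * conj (P.eval w)).re := by
  have hPw : P.eval w ≠ 0 := fun h => (hroots w h).false
  have hsum : 0 < (P.roots.map fun z => 1 / (w - z)).sum.re := by
    have hre := map_multiset_sum reAddGroupHom (P.roots.map fun z => 1 / (w - z))
    rw [coe_reAddGroupHom, Multiset.map_map] at hre
    rw [hre]
    have hne : P.roots ≠ 0 :=
      (IsAlgClosed.splits P).roots_ne_zero (natDegree_pos_iff_degree_pos.2 hP).ne'
    have hterm : ∀ z ∈ P.roots, (0 : ℝ) < (re ∘ fun z => 1 / (w - z)) z := fun z hz => by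
      have hz' := hroots z (isRoot_of_mem_roots hz)
      simp only [Function.comp_apply, one_div, inv_re, sub_re]
      exact div_pos (by linarith) (normSq_pos.2 (sub_ne_zero.2 fun h => by simp [h] at hz'))
    simpa using Multiset.sum_lt_sum_of_nonempty hne hterm
  have hdiv := (IsAlgClosed.splits P).eval_derivative_div_eval_of_ne_zero hPw
  have hnormSq : 0 < normSq (P.eval w) := normSq_pos.2 hPw
  calc (0 : ℝ) < normSq (P.eval w) * (P.derivative.eval w / P.eval w).re := by
        rw [hdiv]; exact mul_pos hnormSq hsum
    _ = _ := by
        rw [div_re]; field_simp; simp [Complex.mul_re]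

theorem exists_isRoot_norm_sub_lt {K : Type*} [NormedField K] [IsAlgClosed K] {q : K[X]}
    {z : K} {ε : ℝ} (hε : 0 ≤ ε) (h : ‖q.eval z‖ < ‖q.leadingCoeff‖ * ε ^ q.natDegree) :
    ∃ w, q.IsRoot w ∧ ‖z - w‖ < ε := by
  by_contra! hfar
  have hnorm : ‖(q.roots.map (z - ·)).prod‖ = (q.roots.map (‖z - ·‖)).prod := by
    simpa [Multiset.map_map] using map_multiset_prod (normHom : K →*₀ ℝ) (q.roots.map (z - ·))
  refine h.not_ge ?_
  rw [(IsAlgClosed.splits q).eval_eq_prod_roots, norm_mul, hnorm,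
    ← IsAlgClosed.card_roots_eq_natDegree, ← Multiset.prod_replicate, ← Multiset.map_const']
  gcongr
  exact Multiset.prod_map_le_prod_map₀ _ _ (fun _ _ => hε)
    fun w hw => hfar w (isRoot_of_mem_roots hw)

theorem map_aeval_le_of_coeff_mul_le {A : Type*} [Semiring A] [Algebra ℝ A]
    (L : A →ₗ[ℝ] ℝ) (z : A) {p q : ℝ[X]} (h : ∀ k, p.coeff k * L (z ^ k) ≤ q.coeff k * L (z ^ k)) :
    L (aeval z p) ≤ L (aeval z q) := by
  have hp : p.natDegree < max p.natDegree q.natDegree + 1 := by omega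
  have hq : q.natDegree < max p.natDegree q.natDegree + 1 := by omega
  rw [aeval_eq_sum_range' hp, aeval_eq_sum_range' hq, map_sum, map_sum]
  exact Finset.sum_le_sum fun k _ => by simpa only [map_smul, smul_eq_mul] using h k

theorem re_aeval_I_mul_eq_of_coeff_even {p q : ℝ[X]}
    (h : ∀ k, Even k → p.coeff k = q.coeff k) (ω : ℝ) :
    (aeval (I * ω) p).re = (aeval (I * ω) q).re := by
  have hcoeff : ∀ k, p.coeff k * reLm ((I * ω) ^ k) = q.coeff k * reLm ((I * ω) ^ k) := by
    intro k
    rcases Nat.even_or_odd k with hk | hk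
    · rw [h k hk]
    · have h4 : k % 4 = 1 ∨ k % 4 = 3 := by rcases hk with ⟨m, rfl⟩; omega
      rcases h4 with h4 | h4 <;> simp [I_mul_ofReal_pow, h4, -ofReal_pow]
  exact le_antisymm (map_aeval_le_of_coeff_mul_le reLm _ fun k => (hcoeff k).le)
    (map_aeval_le_of_coeff_mul_le reLm _ fun k => (hcoeff k).ge)

theorem im_aeval_I_mul_eq_of_coeff_odd {p q : ℝ[X]}
    (h : ∀ k, Odd k → p.coeff k = q.coeff k) (ω : ℝ) :
    (aeval (I * ω) p).im = (aeval (I * ω) q).im := by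
  have hcoeff : ∀ k, p.coeff k * imLm ((I * ω) ^ k) = q.coeff k * imLm ((I * ω) ^ k) := by
    intro k
    rcases Nat.even_or_odd k with hk | hk
    · have h4 : k % 4 = 0 ∨ k % 4 = 2 := by rcases hk with ⟨m, rfl⟩; omega
      rcases h4 with h4 | h4 <;> simp [I_mul_ofReal_pow, h4, -ofReal_pow]
    · rw [h k hk]
  exact le_antisymm (map_aeval_le_of_coeff_mul_le imLm _ fun k => (hcoeff k).le)
    (map_aeval_le_of_coeff_mul_le imLm _ fun k => (hcoeff k).ge)

theorem coeff_derivative_eq_of_coeff_even {R : Type*} [Semiring R] {p q : R[X]}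
    (h : ∀ k, Even k → p.coeff k = q.coeff k) (k : ℕ) (hk : Odd k) :
    (derivative p).coeff k = (derivative q).coeff k := by
  rw [coeff_derivative, coeff_derivative, h (k + 1) hk.add_one]

theorem coeff_derivative_eq_of_coeff_odd {R : Type*} [Semiring R] {p q : R[X]}
    (h : ∀ k, Odd k → p.coeff k = q.coeff k) (k : ℕ) (hk : Even k) :
    (derivative p).coeff k = (derivative q).coeff k := by
  rw [coeff_derivative, coeff_derivative, h (k + 1) hk.add_one]

section Segment

open AffineMap Set Filter Topology NNReal

variable {f g : ℝ[X]} {n : ℕ}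

theorem aeval_lineMap (f g : ℝ[X]) (t : ℝ) (z : ℂ) :
    aeval z (lineMap f g t) = (1 - t) * aeval z f + t * aeval z g := by
  simp [lineMap_apply_module, Algebra.smul_def]

theorem continuous_aeval_lineMap (f g : ℝ[X]) :
    Continuous fun x : ℝ × ℂ => aeval x.2 (lineMap f g x.1) := by
  simp only [aeval_lineMap]
  fun_prop

theorem nnnorm_coeff_lineMap_le {t : ℝ} (ht : t ∈ Icc (0 : ℝ) 1) (k : ℕ) :
    ‖(lineMap f g t : ℝ[X]).coeff k‖₊ ≤ ‖f.coeff k‖₊ + ‖g.coeff k‖₊ := by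
  rw [← NNReal.coe_le_coe, NNReal.coe_add, coe_nnnorm, coe_nnnorm, coe_nnnorm,
    lineMap_apply_module, coeff_add, coeff_smul, coeff_smul, smul_eq_mul, smul_eq_mul]
  obtain ⟨h0, h1⟩ := ht
  calc ‖(1 - t) * f.coeff k + t * g.coeff k‖ ≤ (1 - t) * ‖f.coeff k‖ + t * ‖g.coeff k‖ := by
        refine (norm_add_le _ _).trans_eq ?_
        rw [norm_mul, norm_mul, Real.norm_of_nonneg (by linarith), Real.norm_of_nonneg h0]
    _ ≤ ‖f.coeff k‖ + ‖g.coeff k‖ := by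
        nlinarith [norm_nonneg (f.coeff k), norm_nonneg (g.coeff k)]

theorem exists_forall_norm_le_of_aeval_lineMap_eq_zero
    (hdeg : ∀ t ∈ Icc (0 : ℝ) 1, (lineMap f g t : ℝ[X]).degree = n) :
    ∃ R, ∀ t ∈ Icc (0 : ℝ) 1, ∀ z : ℂ, aeval z (lineMap f g t) = 0 → ‖z‖ ≤ R := by
  obtain ⟨t₀, ht₀, hmin⟩ := isCompact_Icc.exists_isMinOn (nonempty_Icc.2 zero_le_one)
    (f := fun t : ℝ => ‖(lineMap f g t : ℝ[X]).coeff n‖₊) (by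
      simp only [lineMap_apply_module, coeff_add, coeff_smul, smul_eq_mul]
      fun_prop)
  set m := ‖(lineMap f g t₀ : ℝ[X]).coeff n‖₊
  have hm : 0 < m := nnnorm_pos.2 (coeff_ne_zero_of_eq_degree (hdeg t₀ ht₀))
  set C := (Finset.range n).sup fun k => ‖f.coeff k‖₊ + ‖g.coeff k‖₊
  refine ⟨(C / m + 1 : ℝ≥0), fun t ht z hz => ?_⟩
  set q := (lineMap f g t : ℝ[X]).map (algebraMap ℝ ℂ)
  have hqdeg : q.natDegree = n := by
    rw [natDegree_map, natDegree_eq_of_degree_eq_some (hdeg t ht)]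
  have hq0 : q ≠ 0 := by
    rw [← degree_ne_bot, degree_map, hdeg t ht]; exact WithBot.coe_ne_bot
  have hroot := IsRoot.norm_lt_cauchyBound hq0 (a := z) (by rwa [IsRoot, eval_map_algebraMap])
  rw [← coe_nnnorm, NNReal.coe_le_coe]
  refine hroot.le.trans ?_
  rw [cauchyBound, hqdeg, leadingCoeff, hqdeg]
  gcongr
  · exact Finset.sup_mono_fun fun k _ => by
      simpa [q, coeff_map] using nnnorm_coeff_lineMap_le ht k
  · simpa [q, coeff_map] using hmin ht

theorem isClosed_setOf_exists_aeval_lineMap_eq_zero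
    (hdeg : ∀ t ∈ Icc (0 : ℝ) 1, (lineMap f g t : ℝ[X]).degree = n) :
    IsClosed {t ∈ Icc (0 : ℝ) 1 | ∃ z : ℂ, 0 ≤ z.re ∧ aeval z (lineMap f g t) = 0} := by
  obtain ⟨R, hR⟩ := exists_forall_norm_le_of_aeval_lineMap_eq_zero hdeg
  set Z : Set (ℝ × ℂ) := {x | x.1 ∈ Icc 0 1 ∧ 0 ≤ x.2.re ∧ aeval x.2 (lineMap f g x.1) = 0}
  have hZclosed : IsClosed Z :=
    (isClosed_Icc.preimage continuous_fst).inter ((isClosed_le continuous_const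
      (continuous_re.comp continuous_snd)).inter
      (isClosed_eq (continuous_aeval_lineMap f g) continuous_const))
  have hZ : IsCompact Z := (isCompact_Icc.prod (isCompact_closedBall 0 R)).of_isClosed_subset
    hZclosed fun x hx => ⟨hx.1, mem_closedBall_zero_iff.2 (hR x.1 hx.1 x.2 hx.2.2)⟩
  convert (hZ.image continuous_fst).isClosed using 1
  ext t
  simp [Z]

theorem eventually_exists_aeval_lineMap_eq_zero
    (hdeg : ∀ t ∈ Icc (0 : ℝ) 1, (lineMap f g t : ℝ[X]).degree = n) {t : ℝ}
    (ht : t ∈ Icc (0 : ℝ) 1) {z : ℂ} (hz : 0 < z.re) (hroot : aeval z (lineMap f g t) = 0) :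
    ∀ᶠ s in 𝓝[Icc 0 1] t, ∃ w : ℂ, 0 < w.re ∧ aeval w (lineMap f g s) = 0 := by
  have hcoeff : Continuous fun s : ℝ => ‖(lineMap f g s : ℝ[X]).coeff n‖ * z.re ^ n := by
    simp only [lineMap_apply_module, coeff_add, coeff_smul, smul_eq_mul]
    fun_prop
  have hval : Tendsto (fun s : ℝ => ‖aeval z (lineMap f g s)‖) (𝓝 t) (𝓝 0) := by
    simpa [hroot] using ((continuous_aeval_lineMap f g).comp
      (continuous_id.prodMk (continuous_const (y := z)))).norm.tendsto t
  have hpos : 0 < ‖(lineMap f g t : ℝ[X]).coeff n‖ * z.re ^ n :=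
    mul_pos (norm_pos_iff.2 (coeff_ne_zero_of_eq_degree (hdeg t ht))) (pow_pos hz n)
  filter_upwards [nhdsWithin_le_nhds (hval.eventually_lt (hcoeff.tendsto t) hpos),
    self_mem_nhdsWithin] with s hs hsI
  set q := (lineMap f g s : ℝ[X]).map (algebraMap ℝ ℂ)
  have hqdeg : q.natDegree = n := by
    rw [natDegree_map, natDegree_eq_of_degree_eq_some (hdeg s hsI)]
  obtain ⟨w, hw, hzw⟩ := exists_isRoot_norm_sub_lt hz.le (q := q) (z := z) (by
    simpa [q, hqdeg, leadingCoeff, coeff_map, eval_map_algebraMap] using hs)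
  refine ⟨w, ?_, by rwa [IsRoot, eval_map_algebraMap] at hw⟩
  have := (abs_re_le_norm (z - w)).trans_lt hzw
  rw [sub_re, abs_lt] at this
  linarith [this.2]

end Segment

end Polynomial

theorem Hurwitz.re_aeval_derivative_mul_conj_pos {p : ℝ[X]} (hp : Hurwitz p)
    (hdeg : 0 < p.natDegree) {w : ℂ} (hw : 0 ≤ w.re) :
    0 < (aeval w (derivative p) * conj (aeval w p)).re := by
  have h := re_eval_derivative_mul_conj_eval_pos (P := p.map (algebraMap ℝ ℂ)) (w := w)
    (by rwa [degree_map, ← natDegree_pos_iff_degree_pos])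
    fun z hz => (hp z (by rwa [IsRoot, eval_map_algebraMap] at hz)).trans_le hw
  rwa [derivative_map, eval_map_algebraMap, eval_map_algebraMap] at h

theorem Hurwitz.im_mul_im_pos_of_re_eq_zero {p q : ℝ[X]} (hp : Hurwitz p) (hq : Hurwitz q)
    (hpdeg : 0 < p.natDegree) (hqdeg : 0 < q.natDegree)
    (h : ∀ k, Even k → p.coeff k = q.coeff k) {ω : ℝ} (hre : (aeval (I * ω) p).re = 0) :
    0 < (aeval (I * ω) p).im * (aeval (I * ω) q).im := by
  have hw : 0 ≤ (I * ω).re := by simp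
  have hphp := hp.re_aeval_derivative_mul_conj_pos hpdeg hw
  have hphq := hq.re_aeval_derivative_mul_conj_pos hqdeg hw
  simp only [mul_re, conj_re, conj_im] at hphp hphq
  rw [← re_aeval_I_mul_eq_of_coeff_even h,
    ← im_aeval_I_mul_eq_of_coeff_odd (coeff_derivative_eq_of_coeff_even h)] at hphq
  rw [hre] at hphp hphq
  simp only [mul_zero, zero_sub, mul_neg, neg_neg] at hphp hphq
  nlinarith [mul_pos hphp hphq, sq_nonneg (aeval (I * ω) (derivative p)).im]

theorem Hurwitz.re_mul_re_pos_of_im_eq_zero {p q : ℝ[X]} (hp : Hurwitz p) (hq : Hurwitz q)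
    (hpdeg : 0 < p.natDegree) (hqdeg : 0 < q.natDegree)
    (h : ∀ k, Odd k → p.coeff k = q.coeff k) {ω : ℝ} (him : (aeval (I * ω) p).im = 0) :
    0 < (aeval (I * ω) p).re * (aeval (I * ω) q).re := by
  have hw : 0 ≤ (I * ω).re := by simp
  have hphp := hp.re_aeval_derivative_mul_conj_pos hpdeg hw
  have hphq := hq.re_aeval_derivative_mul_conj_pos hqdeg hw
  simp only [mul_re, conj_re, conj_im] at hphp hphq
  rw [← im_aeval_I_mul_eq_of_coeff_odd h,
    ← re_aeval_I_mul_eq_of_coeff_even (coeff_derivative_eq_of_coeff_odd h)] at hphq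
  rw [him] at hphp hphq
  simp only [mul_zero, neg_zero, sub_zero] at hphp hphq
  nlinarith [mul_pos hphp hphq, sq_nonneg (aeval (I * ω) (derivative p)).re]

open AffineMap Set in
theorem Convex.hurwitz_of_mem {S : Set ℝ[X]} {n : ℕ} (hS : Convex ℝ S)
    (hdeg : ∀ q ∈ S, q.degree = n) (himag : ∀ q ∈ S, ∀ z : ℂ, z.re = 0 → aeval z q ≠ 0)
    {f g : ℝ[X]} (hf : f ∈ S) (hg : g ∈ S) (hfH : Hurwitz f) : Hurwitz g := by
  have hseg : ∀ t ∈ Icc (0 : ℝ) 1, lineMap f g t ∈ S := fun t ht =>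
    hS.segment_subset hf hg (segment_eq_image_lineMap ℝ f g ▸ mem_image_of_mem _ ht)
  have hsegdeg : ∀ t ∈ Icc (0 : ℝ) 1, (lineMap f g t : ℝ[X]).degree = n :=
    fun t ht => hdeg _ (hseg t ht)
  have := Subtype.preconnectedSpace (isPreconnected_Icc (a := (0 : ℝ)) (b := 1))
  -- The parameters whose polynomial has a root with nonnegative real part form a clopen set.
  set U : Set (Icc (0 : ℝ) 1) := {t | ∃ z : ℂ, 0 ≤ z.re ∧ aeval z (lineMap f g (t : ℝ)) = 0}
  have hclosed : IsClosed U := by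
    convert (isClosed_setOf_exists_aeval_lineMap_eq_zero hsegdeg).preimage continuous_subtype_val
    exact Set.ext fun t => ⟨fun h => ⟨t.2, h⟩, And.right⟩
  have hopen : IsOpen U := isOpen_iff_mem_nhds.2 fun t ⟨z, hz, hroot⟩ => by
    have hz' : 0 < z.re := hz.lt_of_ne fun h => himag _ (hseg t t.2) z h.symm hroot
    exact (eventually_nhds_subtype_iff _ t
      fun s => ∃ z : ℂ, 0 ≤ z.re ∧ aeval z (lineMap f g s) = 0).2 <|
      (eventually_exists_aeval_lineMap_eq_zero hsegdeg t.2 hz' hroot).mono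
        fun s ⟨w, hw, hs⟩ => ⟨w, hw.le, hs⟩
  rcases isClopen_iff.1 ⟨hclosed, hopen⟩ with hU | hU
  · intro z hz
    by_contra! hre
    have h1 : (⟨1, right_mem_Icc.2 zero_le_one⟩ : Icc (0 : ℝ) 1) ∈ U :=
      ⟨z, hre, by simpa using hz⟩
    simp [hU] at h1
  · have h0 : (⟨0, left_mem_Icc.2 zero_le_one⟩ : Icc (0 : ℝ) 1) ∈ U := hU ▸ mem_univ _
    obtain ⟨z, hz, hroot⟩ := h0
    exact ((hfH z (by simpa using hroot)).not_ge hz).elim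

section Kharitonov

variable {n : ℕ} {lo hi : ℕ → ℝ}

local notation "K₁" => kpoly n lo hi {2, 3}
local notation "K₂" => kpoly n lo hi {0, 1}
local notation "K₃" => kpoly n lo hi {0, 3}
local notation "K₄" => kpoly n lo hi {1, 2}

theorem coeff_kpoly (hbeyond : ∀ i, n < i → lo i = 0 ∧ hi i = 0) (S : Finset ℕ) (k : ℕ) :
    (kpoly n lo hi S).coeff k = if k % 4 ∈ S then hi k else lo k := by
  simp only [kpoly, finsetSum_coeff, coeff_C_mul_X_pow, Finset.sum_ite_eq, Finset.mem_range]
  by_cases hk : k < n + 1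
  · rw [if_pos hk]
  · obtain ⟨hlo, hhi⟩ := hbeyond k (by omega)
    simp [hk, hlo, hhi]

theorem kpoly_mem_intervalFamily (hle : ∀ i, lo i ≤ hi i)
    (hbeyond : ∀ i, n < i → lo i = 0 ∧ hi i = 0) (S : Finset ℕ) :
    kpoly n lo hi S ∈ intervalFamily lo hi := fun k => by
  rw [coeff_kpoly hbeyond]
  split_ifs
  exacts [⟨hle k, le_rfl⟩, ⟨le_rfl, hle k⟩]

theorem convex_intervalFamily (lo hi : ℕ → ℝ) : Convex ℝ (intervalFamily lo hi) := by
  intro p hp q hq a b ha hb hab k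
  simp only [coeff_add, coeff_smul, smul_eq_mul]
  obtain ⟨hp1, hp2⟩ := hp k
  obtain ⟨hq1, hq2⟩ := hq k
  obtain rfl : b = 1 - a := by linarith
  constructor <;> nlinarith

theorem degree_eq_of_mem_intervalFamily (hbeyond : ∀ i, n < i → lo i = 0 ∧ hi i = 0)
    (hlead : (0 : ℝ) ∉ Set.Icc (lo n) (hi n))
    {p : ℝ[X]} (hp : p ∈ intervalFamily lo hi) : p.degree = n := by
  refine degree_eq_of_le_of_coeff_ne_zero (degree_le_iff_coeff_zero _ _ |>.2 fun k hk => ?_)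
    fun h => hlead ?_
  · obtain ⟨hlo, hhi⟩ := hbeyond k (by exact_mod_cast hk)
    obtain ⟨h1, h2⟩ := hp k
    linarith
  · simpa [h] using hp n

theorem kharitonov_rectangle (hbeyond : ∀ i, n < i → lo i = 0 ∧ hi i = 0) {p : ℝ[X]}
    (hp : p ∈ intervalFamily lo hi) {ω : ℝ} (hω : 0 ≤ ω) :
    (aeval (I * ω) K₁).re ≤ (aeval (I * ω) p).re ∧
      (aeval (I * ω) p).re ≤ (aeval (I * ω) K₃).re ∧
      (aeval (I * ω) K₁).im ≤ (aeval (I * ω) p).im ∧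
      (aeval (I * ω) p).im ≤ (aeval (I * ω) K₂).im := by
  refine ⟨map_aeval_le_of_coeff_mul_le reLm _ fun k => ?_,
    map_aeval_le_of_coeff_mul_le reLm _ fun k => ?_,
    map_aeval_le_of_coeff_mul_le imLm _ fun k => ?_,
    map_aeval_le_of_coeff_mul_le imLm _ fun k => ?_⟩ <;>
  · obtain ⟨hlo, hhi⟩ := hp k
    have hωk := pow_nonneg hω k
    have h4 : k % 4 = 0 ∨ k % 4 = 1 ∨ k % 4 = 2 ∨ k % 4 = 3 := by omega
    rcases h4 with h4 | h4 | h4 | h4 <;>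
      simp [coeff_kpoly hbeyond, I_mul_ofReal_pow, h4, -ofReal_pow] <;> nlinarith

theorem coeff_kpoly_eq_of_even (hbeyond : ∀ i, n < i → lo i = 0 ∧ hi i = 0) {S T : Finset ℕ}
    (hST : ∀ r ∈ ({0, 2} : Finset ℕ), r ∈ S ↔ r ∈ T) (k : ℕ) (hk : Even k) :
    (kpoly n lo hi S).coeff k = (kpoly n lo hi T).coeff k := by
  have h4 : k % 4 ∈ ({0, 2} : Finset ℕ) := by rcases hk with ⟨m, rfl⟩; simp; omega
  simp only [coeff_kpoly hbeyond, hST _ h4]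

theorem coeff_kpoly_eq_of_odd (hbeyond : ∀ i, n < i → lo i = 0 ∧ hi i = 0) {S T : Finset ℕ}
    (hST : ∀ r ∈ ({1, 3} : Finset ℕ), r ∈ S ↔ r ∈ T) (k : ℕ) (hk : Odd k) :
    (kpoly n lo hi S).coeff k = (kpoly n lo hi T).coeff k := by
  have h4 : k % 4 ∈ ({1, 3} : Finset ℕ) := by rcases hk with ⟨m, rfl⟩; simp; omega
  simp only [coeff_kpoly hbeyond, hST _ h4]

theorem kharitonov_edges (hle : ∀ i, lo i ≤ hi i) (hbeyond : ∀ i, n < i → lo i = 0 ∧ hi i = 0)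
    (hlead : (0 : ℝ) ∉ Set.Icc (lo n) (hi n)) (hn : 0 < n) (h₁ : Hurwitz K₁) (h₂ : Hurwitz K₂)
    (h₃ : Hurwitz K₃) (h₄ : Hurwitz K₄) (ω : ℝ) :
    ((aeval (I * ω) K₁).re * (aeval (I * ω) K₃).re = 0 →
        0 < (aeval (I * ω) K₁).im * (aeval (I * ω) K₂).im) ∧
      ((aeval (I * ω) K₁).im * (aeval (I * ω) K₂).im = 0 →
        0 < (aeval (I * ω) K₁).re * (aeval (I * ω) K₃).re) := by
  have hdeg : ∀ S, 0 < (kpoly n lo hi S).natDegree := fun S => by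
    rwa [natDegree_eq_of_degree_eq_some
      (degree_eq_of_mem_intervalFamily hbeyond hlead (kpoly_mem_intervalFamily hle hbeyond S))]
  have e₁₄ := coeff_kpoly_eq_of_even hbeyond (S := {2, 3}) (T := {1, 2}) (by decide)
  have e₃₂ := coeff_kpoly_eq_of_even hbeyond (S := {0, 3}) (T := {0, 1}) (by decide)
  have o₁₃ := coeff_kpoly_eq_of_odd hbeyond (S := {2, 3}) (T := {0, 3}) (by decide)
  have o₂₄ := coeff_kpoly_eq_of_odd hbeyond (S := {0, 1}) (T := {1, 2}) (by decide)
  constructor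
  · intro h
    rcases mul_eq_zero.1 h with h | h
    · have := h₁.im_mul_im_pos_of_re_eq_zero h₄ (hdeg _) (hdeg _) e₁₄ h
      rwa [← im_aeval_I_mul_eq_of_coeff_odd o₂₄] at this
    · have := h₃.im_mul_im_pos_of_re_eq_zero h₂ (hdeg _) (hdeg _) e₃₂ h
      rwa [← im_aeval_I_mul_eq_of_coeff_odd o₁₃] at this
  · intro h
    rcases mul_eq_zero.1 h with h | h
    · exact h₁.re_mul_re_pos_of_im_eq_zero h₃ (hdeg _) (hdeg _) o₁₃ h
    · have := h₂.re_mul_re_pos_of_im_eq_zero h₄ (hdeg _) (hdeg _) o₂₄ h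
      rwa [← re_aeval_I_mul_eq_of_coeff_even e₃₂, ← re_aeval_I_mul_eq_of_coeff_even e₁₄,
        mul_comm] at this

theorem aeval_I_mul_ne_zero_of_mem_intervalFamily (hle : ∀ i, lo i ≤ hi i)
    (hbeyond : ∀ i, n < i → lo i = 0 ∧ hi i = 0) (hlead : (0 : ℝ) ∉ Set.Icc (lo n) (hi n))
    (hn : 0 < n) (h₁ : Hurwitz K₁) (h₂ : Hurwitz K₂) (h₃ : Hurwitz K₃) (h₄ : Hurwitz K₄)
    {p : ℝ[X]} (hp : p ∈ intervalFamily lo hi) {ω : ℝ} (hω : 0 ≤ ω) : aeval (I * ω) p ≠ 0 := by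
  intro hroot
  -- `max (A ω) (B ω) ≤ 0` says that `0` lies in the rectangle of values at `iω`.
  set A : ℝ → ℝ := fun ω => (aeval (I * ω) K₁).re * (aeval (I * ω) K₃).re
  set B : ℝ → ℝ := fun ω => (aeval (I * ω) K₁).im * (aeval (I * ω) K₂).im
  have hedges := kharitonov_edges hle hbeyond hlead hn h₁ h₂ h₃ h₄
  have hcont : Continuous fun ω => max (A ω) (B ω) := by
    simp only [A, B]
    fun_prop
  have hstart : 0 < max (A 0) (B 0) :=
    lt_max_of_lt_left ((hedges 0).2 (by simp [← coeff_zero_eq_aeval_zero']))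
  have hend : max (A ω) (B ω) ≤ 0 := by
    obtain ⟨hre₁, hre₃, him₁, him₂⟩ := kharitonov_rectangle hbeyond hp hω
    rw [hroot, zero_re] at hre₁ hre₃
    rw [hroot, zero_im] at him₁ him₂
    exact max_le (mul_nonpos_of_nonpos_of_nonneg hre₁ hre₃)
      (mul_nonpos_of_nonpos_of_nonneg him₁ him₂)
  obtain ⟨c, -, hc⟩ := intermediate_value_Icc' hω hcont.continuousOn ⟨hend, hstart.le⟩
  replace hc : max (A c) (B c) = 0 := hc
  rcases max_choice (A c) (B c) with h | h
  · have hA : A c = 0 := h ▸ hc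
    linarith [(hedges c).1 hA, le_max_right (A c) (B c)]
  · have hB : B c = 0 := h ▸ hc
    linarith [(hedges c).2 hB, le_max_left (A c) (B c)]

theorem aeval_ne_zero_of_mem_intervalFamily (hle : ∀ i, lo i ≤ hi i)
    (hbeyond : ∀ i, n < i → lo i = 0 ∧ hi i = 0) (hlead : (0 : ℝ) ∉ Set.Icc (lo n) (hi n))
    (h₁ : Hurwitz K₁) (h₂ : Hurwitz K₂) (h₃ : Hurwitz K₃) (h₄ : Hurwitz K₄)
    {p : ℝ[X]} (hp : p ∈ intervalFamily lo hi) {z : ℂ} (hz : z.re = 0) : aeval z p ≠ 0 := by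
  have hdeg := degree_eq_of_mem_intervalFamily hbeyond hlead hp
  rcases Nat.eq_zero_or_pos n with rfl | hn
  · rw [eq_C_of_degree_eq_zero hdeg, aeval_C, Complex.coe_algebraMap, ofReal_ne_zero]
    exact coeff_ne_zero_of_eq_degree hdeg
  rcases le_total 0 z.im with him | him
  · have hz' : z = I * z.im := by apply Complex.ext <;> simp [hz]
    rw [hz']
    exact aeval_I_mul_ne_zero_of_mem_intervalFamily hle hbeyond hlead hn h₁ h₂ h₃ h₄ hp him
  · have hz' : conj z = I * ↑(-z.im) := by apply Complex.ext <;> simp [hz]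
    intro hroot
    refine aeval_I_mul_ne_zero_of_mem_intervalFamily hle hbeyond hlead hn h₁ h₂ h₃ h₄ hp
      (neg_nonneg.2 him) ?_
    rw [← hz', aeval_conj, hroot, map_zero]

end Kharitonov

/-- Kharitonov's Theorem for real interval polynomial families:
`K₁ = kpoly n lo hi {2,3}`, `K₂ = kpoly n lo hi {0,1}`,
`K₃ = kpoly n lo hi {0,3}`, `K₄ = kpoly n lo hi {1,2}`. -/
theorem kharitonov_real (n : ℕ) (lo hi : ℕ → ℝ)
    (hle : ∀ i, lo i ≤ hi i)
    (hbeyond : ∀ i, n < i → lo i = 0 ∧ hi i = 0)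
    (hlead : (0 : ℝ) ∉ Set.Icc (lo n) (hi n)) :
    (∀ p ∈ intervalFamily lo hi, Hurwitz p) ↔
      (Hurwitz (kpoly n lo hi {2, 3}) ∧ Hurwitz (kpoly n lo hi {0, 1}) ∧
       Hurwitz (kpoly n lo hi {0, 3}) ∧ Hurwitz (kpoly n lo hi {1, 2})) := by
  have hK := kpoly_mem_intervalFamily hle hbeyond
  refine ⟨fun H => ⟨H _ (hK _), H _ (hK _), H _ (hK _), H _ (hK _)⟩, ?_⟩
  rintro ⟨h₁, h₂, h₃, h₄⟩ p hp
  exact (convex_intervalFamily lo hi).hurwitz_of_mem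
    (fun q hq => degree_eq_of_mem_intervalFamily hbeyond hlead hq)
    (fun q hq z hz => aeval_ne_zero_of_mem_intervalFamily hle hbeyond hlead h₁ h₂ h₃ h₄ hq hz)
    (hK _) hp h₁
end

section
/- (Lemma 8) Let g and f be real polynomials with deg g < deg f and with g + f Hurwitz stable, and let γ > 1. Then sup_{ω∈ℝ} |f(jω)/(f(jω)+g(jω))| < γ if and only if the complex polynomial g(s) + (1 + (1/γ) e^{jθ}) f(s) is Hurwitz stable for every θ ∈ [−π, π]. -/
open Polynomial

/-- The H∞ norm of the sensitivity function `S = f/(f+g)`: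
`‖S‖_∞ = sup_{ω ∈ ℝ} |f(jω)/(f(jω)+g(jω))|`. -/
noncomputable def sensNorm (f g : ℝ[X]) : ℝ :=
  ⨆ ω : ℝ, ‖
    (Polynomial.aeval ((ω : ℂ) * Complex.I) f /
      (Polynomial.aeval ((ω : ℂ) * Complex.I) f + Polynomial.aeval ((ω : ℂ) * Complex.I) g))‖

/-!
On the closed right half-plane the sensitivity `S = f/(f+g)` is holomorphic (as `f + g` is stable)
and tends to `1` at infinity (as `deg g < deg f`), so by Phragmén–Lindelöf `|S| ≤ ‖S‖_∞` there.
If `‖S‖_∞ < γ` and `|c| = 1/γ`, then `g + (1 + c) f = (f + g)(1 + c S)` has no root there.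
Conversely, `|S(jω)| = γ` would make `jω` a root for `e^{jθ} = -γ / S(jω)`; so `|S(jω)|`, being
continuous and tending to `1 < γ`, stays below `γ`, and by compactness so does its supremum.
-/

open Complex Filter Bornology Topology Set

theorem Continuous.exists_forall_le_max_of_tendsto_cocompact {X α : Type*} [TopologicalSpace X]
    [Nonempty X] [LinearOrder α] [TopologicalSpace α] [OrderTopology α] {f : X → α} {a b : α}
    (hf : Continuous f) (hlim : Tendsto f (cocompact X) (𝓝 a)) (hab : a < b) :
    ∃ x, ∀ y, f y ≤ max (f x) b := by
  have hev : ∀ᶠ y in cocompact X, max (f y) b ≤ max (f (Classical.arbitrary X)) b :=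
    (hlim.eventually (gt_mem_nhds hab)).mono fun y hy => by simp [hy.le]
  obtain ⟨x, hx⟩ := (hf.max continuous_const).exists_forall_ge' _ hev
  exact ⟨x, fun y => (le_max_left _ _).trans (hx y)⟩

theorem tendsto_ofReal_mul_I_cocompact_cobounded :
    Tendsto (fun ω : ℝ => (ω : ℂ) * I) (cocompact ℝ) (cobounded ℂ) := by
  refine tendsto_norm_atTop_iff_cobounded.mp ?_
  simp only [norm_mul, norm_I, mul_one, norm_real]
  exact tendsto_norm_cocompact_atTop

theorem Polynomial.tendsto_eval_div_eval_cobounded {𝕜 : Type*} [NormedField 𝕜] {P Q : 𝕜[X]}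
    (h : (P - Q).degree < Q.degree) :
    Tendsto (fun z => P.eval z / Q.eval z) (cobounded 𝕜) (𝓝 1) := by
  have hQ : ∀ᶠ z in cobounded 𝕜, Q.eval z ≠ 0 :=
    (finite_setOfPred_isRoot (ne_zero_of_degree_gt h)).isBounded
  have hPQ : (fun z => P.eval z - Q.eval z) =o[cobounded 𝕜] Q.eval := by
    simpa only [eval_sub] using isLittleO_cobounded_of_degree_lt h
  exact (Asymptotics.isEquivalent_iff_tendsto_one hQ).mp hPQ

theorem norm_le_of_tendsto_cobounded_of_norm_le_on_imaginary {E : Type*} [NormedAddCommGroup E]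
    [NormedSpace ℂ E] {φ : ℂ → E} {a : E} {C : ℝ} {z : ℂ}
    (hd : DiffContOnCl ℂ φ {z | 0 < z.re}) (hlim : Tendsto φ (cobounded ℂ) (𝓝 a))
    (him : ∀ ω : ℝ, ‖φ (ω * I)‖ ≤ C) (hz : 0 ≤ z.re) : ‖φ z‖ ≤ C := by
  refine PhragmenLindelof.right_half_plane_of_bounded_on_real hd ⟨1, one_lt_two, 0, ?_⟩
    ((hlim.comp (RCLike.tendsto_ofReal_atTop_cobounded ℂ)).norm.isBoundedUnder_le) him hz
  simpa using (hlim.isBigO_one ℝ).mono inf_le_left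

theorem Hurwitz.aeval_ne_zero {R : Type} [CommRing R] [Algebra R ℂ] {p : R[X]} (hp : Hurwitz p)
    {z : ℂ} (hz : 0 ≤ z.re) : aeval z p ≠ 0 :=
  fun h => (hp z h).not_ge hz

noncomputable def sensitivity (f g : ℝ[X]) (s : ℂ) : ℂ :=
  aeval s f / (aeval s f + aeval s g)

theorem sensNorm_eq_iSup_norm_sensitivity (f g : ℝ[X]) :
    sensNorm f g = ⨆ ω : ℝ, ‖sensitivity f g (ω * I)‖ := rfl

section Sensitivity

variable {f g : ℝ[X]}

theorem aeval_add_ne_zero_of_hurwitz (hH : Hurwitz (g + f)) {z : ℂ} (hz : 0 ≤ z.re) :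
    aeval z f + aeval z g ≠ 0 := by
  simpa [add_comm] using hH.aeval_ne_zero hz

theorem differentiableOn_sensitivity (hH : Hurwitz (g + f)) :
    DifferentiableOn ℂ (sensitivity f g) {z | 0 ≤ z.re} :=
  fun _ hz => DifferentiableAt.differentiableWithinAt <| DifferentiableAt.div
    (f.differentiableAt_aeval) (f.differentiableAt_aeval.add g.differentiableAt_aeval)
    (aeval_add_ne_zero_of_hurwitz hH hz)

theorem tendsto_sensitivity_cobounded (hdeg : g.natDegree < f.natDegree) :
    Tendsto (sensitivity f g) (cobounded ℂ) (𝓝 1) := by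
  have hdeg' : g.degree < f.degree := degree_lt_degree hdeg
  have key := Polynomial.tendsto_eval_div_eval_cobounded
    (P := f.map (algebraMap ℝ ℂ)) (Q := (f + g).map (algebraMap ℝ ℂ)) (by
      rw [← Polynomial.map_sub, degree_map, degree_map, sub_add_cancel_left, degree_neg,
        degree_add_eq_left_of_degree_lt hdeg']
      exact hdeg')
  unfold sensitivity
  simpa [eval_map_algebraMap] using key

theorem continuous_norm_sensitivity_mul_I (hH : Hurwitz (g + f)) :
    Continuous fun ω : ℝ => ‖sensitivity f g (ω * I)‖ :=
  ((differentiableOn_sensitivity hH).continuousOn.comp_continuous (by fun_prop)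
    (fun ω => by simp)).norm

theorem tendsto_norm_sensitivity_mul_I (hdeg : g.natDegree < f.natDegree) :
    Tendsto (fun ω : ℝ => ‖sensitivity f g (ω * I)‖) (cocompact ℝ) (𝓝 1) := by
  simpa using ((tendsto_sensitivity_cobounded hdeg).comp tendsto_ofReal_mul_I_cocompact_cobounded).norm

theorem norm_sensitivity_le_sensNorm (hdeg : g.natDegree < f.natDegree) (hH : Hurwitz (g + f))
    {z : ℂ} (hz : 0 ≤ z.re) : ‖sensitivity f g z‖ ≤ sensNorm f g := by
  obtain ⟨ω₀, hω₀⟩ :=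
    (continuous_norm_sensitivity_mul_I hH).exists_forall_le_max_of_tendsto_cocompact
      (tendsto_norm_sensitivity_mul_I hdeg) one_lt_two
  have hbdd : BddAbove (range fun ω : ℝ => ‖sensitivity f g (ω * I)‖) :=
    ⟨_, forall_mem_range.mpr hω₀⟩
  have hd : DiffContOnCl ℂ (sensitivity f g) {z | 0 < z.re} := by
    refine DifferentiableOn.diffContOnCl ?_
    simpa only [closure_setOfPred_lt_re] using differentiableOn_sensitivity hH
  exact norm_le_of_tendsto_cobounded_of_norm_le_on_imaginary hd
    (tendsto_sensitivity_cobounded hdeg) (fun ω => le_ciSup hbdd ω) hz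

theorem hurwitz_of_norm_mul_sensNorm_lt_one (hdeg : g.natDegree < f.natDegree)
    (hH : Hurwitz (g + f)) {c : ℂ} (hc : ‖c‖ * sensNorm f g < 1) :
    Hurwitz (g.map (algebraMap ℝ ℂ) + Polynomial.C (1 + c) * f.map (algebraMap ℝ ℂ)) := by
  intro z hz
  by_contra! hre
  have hD := aeval_add_ne_zero_of_hurwitz hH hre
  have hcS : ‖c * sensitivity f g z‖ < 1 := by
    rw [norm_mul]
    exact (mul_le_mul_of_nonneg_left (norm_sensitivity_le_sensNorm hdeg hH hre)
      (norm_nonneg c)).trans_lt hc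
  have hfactor : aeval z (g.map (algebraMap ℝ ℂ) + Polynomial.C (1 + c) * f.map (algebraMap ℝ ℂ))
      = (aeval z f + aeval z g) * (1 + c * sensitivity f g z) := by
    simp only [map_add, map_mul, aeval_C, aeval_map_algebraMap, Algebra.algebraMap_self,
      RingHom.id_apply, sensitivity]
    field_simp
    ring
  rw [hfactor, mul_eq_zero] at hz
  refine hz.elim hD fun h => ?_
  rw [add_eq_zero_iff_eq_neg'] at h
  simp [h] at hcS

theorem exists_aeval_eq_zero_of_norm_sensitivity_eq {γ : ℝ} (hγ : 0 < γ) {s : ℂ}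
    (hs : ‖sensitivity f g s‖ = γ) :
    ∃ θ ∈ Icc (-Real.pi) Real.pi,
      aeval s (g.map (algebraMap ℝ ℂ) +
        Polynomial.C (1 + (1 / (γ : ℂ)) * exp ((θ : ℂ) * I)) * f.map (algebraMap ℝ ℂ)) = 0 := by
  set w : ℂ := -γ / sensitivity f g s
  have hw : ‖w‖ = 1 := by
    rw [norm_div, norm_neg, norm_real, Real.norm_of_nonneg hγ.le, hs, div_self hγ.ne']
  refine ⟨w.arg, ⟨(neg_pi_lt_arg w).le, arg_le_pi w⟩, ?_⟩
  have hexp : exp (w.arg * I) = w := by simpa [hw] using norm_mul_exp_arg_mul_I w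
  have hS : sensitivity f g s ≠ 0 := by
    rintro h; rw [h, norm_zero] at hs; exact hγ.ne hs
  have hf : aeval s f ≠ 0 := by intro h; simp [sensitivity, h] at hS
  have hD : aeval s f + aeval s g ≠ 0 := by intro h; simp [sensitivity, h] at hS
  have hγ' : (γ : ℂ) ≠ 0 := by exact_mod_cast hγ.ne'
  -- with `exp (θ * I) = -γ / S`, the value at `s` is `g + f - f / S = 0`
  simp only [map_add, map_mul, aeval_C, aeval_map_algebraMap, Algebra.algebraMap_self,
    RingHom.id_apply]
  rw [hexp]
  simp only [w, sensitivity]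
  field_simp
  ring

theorem sensNorm_lt_of_forall_norm_sensitivity_ne (hdeg : g.natDegree < f.natDegree)
    (hH : Hurwitz (g + f)) {γ : ℝ} (hγ : 1 < γ) (hne : ∀ ω : ℝ, ‖sensitivity f g (ω * I)‖ ≠ γ) :
    sensNorm f g < γ := by
  set S := fun ω : ℝ => ‖sensitivity f g (ω * I)‖
  have hS : Continuous S := continuous_norm_sensitivity_mul_I hH
  have hlim : Tendsto S (cocompact ℝ) (𝓝 1) := tendsto_norm_sensitivity_mul_I hdeg
  have hlt : ∀ ω, S ω < γ := fun ω => lt_of_not_ge fun hge => by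
    obtain ⟨ω', hω'⟩ := intermediate_value_univ₂_eventually₁ continuous_const hS hge
      ((hlim.eventually (gt_mem_nhds hγ)).mono fun _ h => h.le)
    exact hne ω' hω'.symm
  obtain ⟨ω₀, hω₀⟩ := hS.exists_forall_le_max_of_tendsto_cocompact hlim
    (show 1 < (1 + γ) / 2 by linarith)
  rw [sensNorm_eq_iSup_norm_sensitivity]
  exact (ciSup_le hω₀).trans_lt (max_lt (hlt ω₀) (by linarith))

end Sensitivity

/-- Lemma 8: with `deg g < deg f`, `g + f` Hurwitz stable and `γ > 1`, we have
`‖f/(f+g)‖_∞ < γ` iff `g(s) + (1 + (1/γ) e^{jθ}) f(s)` is Hurwitz stable for every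
`θ ∈ [-π, π]`. -/
theorem lemma8 (g f : ℝ[X])
    (hdeg : g.natDegree < f.natDegree) (hH : Hurwitz (g + f))
    (γ : ℝ) (hγ : 1 < γ) :
    sensNorm f g < γ ↔
      ∀ θ ∈ Set.Icc (-Real.pi) Real.pi,
        Hurwitz (g.map (algebraMap ℝ ℂ) +
          Polynomial.C (1 + (1 / (γ : ℂ)) * Complex.exp ((θ : ℂ) * Complex.I)) *
            f.map (algebraMap ℝ ℂ)) := by
  have hγ₀ : 0 < γ := by linarith
  constructor
  · intro hlt θ _
    refine hurwitz_of_norm_mul_sensNorm_lt_one hdeg hH ?_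
    rw [norm_mul, norm_exp_ofReal_mul_I, mul_one, norm_div, norm_one, norm_real,
      Real.norm_of_nonneg hγ₀.le, one_div_mul_eq_div, div_lt_one hγ₀]
    exact hlt
  · intro hall
    refine sensNorm_lt_of_forall_norm_sensitivity_ne hdeg hH hγ fun ω hω => ?_
    obtain ⟨θ, hθ, hroot⟩ := exists_aeval_eq_zero_of_norm_sensitivity_eq hγ₀ hω
    simpa using hall θ hθ _ hroot
end
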